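/- For each 0 < ε₁, ε₂ < 1 there exists d₀ = d₀(ε₁, ε₂) such that the following holds for every n ≥ d ≥ d₀. Let G be an n-vertex (ε₁, ε₂·d)-expander with minimum degree δ(G) ≥ d − 1, let W ⊆ V(G), and set m₀ := (40/ε₁)·log³(15n/(ε₂d)). If C ⊆ V(G)∖W satisfies |C| ≥ ε₂·d/2 and |W| ≤ ε(|C|, ε₁, ε₂d)·|C|/4, then |B^{m₀}_{G−W}(C)| > n/2. -/

import Mathlib

open scoped BigOperators

/-- The average degree of a graph `G`: `(1/|G|) * sum of degrees`. -/
noncomputable def avgDeg {V : Type*} (G : SimpleGraph V) : Real :=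
  (finsum fun v : V => ((G.neighborSet v).ncard : Real)) / (Nat.card V : Real)

/-- The function `eps(x, eps1, k)` from the definition of robust sublinear expanders. -/
noncomputable def epsFun (eps1 k x : Real) : Real :=
  if x < k / 5 then 0 else eps1 / (Real.log (15 * x / k)) ^ 2

/-- The external neighbourhood of a vertex set `X` in a graph `H`. -/
def extNbr {V : Type*} (H : SimpleGraph V) (X : Set V) : Set V :=
  {w : V | w ∉ X ∧ ∃ v ∈ X, H.Adj v w}

/-- `G` is an `(eps1, k)`-robust-expander. -/
def IsExpander {V : Type*} (G : SimpleGraph V) (eps1 k : Real) : Prop :=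
  ∀ X : Set V, k / 2 ≤ (X.ncard : Real) → (X.ncard : Real) ≤ (Nat.card V : Real) / 2 →
    ∀ F : SimpleGraph V, F ≤ G →
      (F.edgeSet.ncard : Real) ≤ avgDeg G * epsFun eps1 k (X.ncard) * (X.ncard : Real) →
      epsFun eps1 k (X.ncard) * (X.ncard : Real) ≤ ((extNbr (G \ F) X).ncard : Real)

/-- The minimum degree of `G` is at least `d`. -/
def minDegGe {V : Type*} (G : SimpleGraph V) (d : Real) : Prop :=
  ∀ v : V, d ≤ ((G.neighborSet v).ncard : Real)

/-- The ball of radius `r` around the set `C` in the graph `G - W`. -/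
def ballAvoid {V : Type*} (G : SimpleGraph V) (W C : Set V) (r : Real) : Set V :=
  {v : V | ∃ c ∈ C, ∃ p : G.Walk c v, (p.length : Real) ≤ r ∧ ∀ x ∈ p.support, x ∉ W}

/-!
Grow the ball around `C` in `G - W` one layer at a time. While the ball `X` has at most `n/2`
vertices, expansion (removing no edges) gives `|N(X)| ≥ ε(|X|)|X|`. As `x ↦ ε(x)·x` increases
on `[k/2, ∞)` (`k = ε₂d`), the forbidden set takes away at most
`|W| ≤ ε(|C|)|C|/4 ≤ ε(|X|)|X|/4` of these, and as `ε` decreases, each layer multiplies `|X|`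
by at least `1 + c` with `c = 3ε(n)/4 = 3ε₁/(4L²)`, `L = log(15n/k)`. After `m = ⌊40L³/ε₁⌋`
layers, `(1 + c)^m ≥ exp(mc/2) ≥ exp L = 15n/k`, so the ball has more than
`(k/2)(15n/k) > n/2` vertices.
-/

open Real

lemma exp_two_lt_fifteen_halves : exp 2 < 15 / 2 := by
  have h : exp 2 = exp 1 * exp 1 := by rw [← exp_add]; norm_num
  nlinarith [exp_one_lt_d9, exp_pos 1]

lemma monotoneOn_div_log_sq : MonotoneOn (fun t : ℝ => t / log t ^ 2) (Set.Ici (exp 2)) := by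
  have hlog : ∀ x ∈ Set.Ici (exp 2), 2 ≤ log x := fun x hx =>
    (le_log_iff_exp_le (lt_of_lt_of_le (exp_pos 2) hx)).2 hx
  refine (strictMonoOn_of_deriv_pos (convex_Ici _) ?_ ?_).monotoneOn
  · refine continuousOn_id.div ((continuousOn_log.mono fun x hx => ?_).pow 2) fun x hx => ?_
    · exact (lt_of_lt_of_le (exp_pos 2) hx).ne'
    · exact pow_ne_zero _ (by linarith [hlog x hx])
  · intro x hx
    rw [interior_Ici] at hx
    have hx0 : 0 < x := (exp_pos 2).trans hx
    have hlx : 2 < log x := (lt_log_iff_exp_lt hx0).2 hx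
    have hd : HasDerivAt (fun t => t / log t ^ 2)
        ((log x ^ 2 - 2 * log x) / (log x ^ 2) ^ 2) x := by
      refine ((hasDerivAt_id' x).div ((hasDerivAt_log hx0.ne').pow 2)
        (pow_ne_zero 2 (by linarith : log x ≠ 0))).congr_deriv ?_
      simp only [Pi.pow_apply]
      field_simp
      ring
    rw [hd.deriv]
    exact div_pos (by nlinarith) (by positivity)

lemma exp_mul_half_le_one_add_pow {c : ℝ} (hc0 : 0 ≤ c) (hc2 : c ≤ 2) (m : ℕ) :
    exp (m * c / 2) ≤ (1 + c) ^ m := by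
  have hlog : c / 2 ≤ log (1 + c) := by
    refine le_trans ?_ (le_log_one_add_of_nonneg hc0)
    rw [div_le_div_iff₀ (by norm_num) (by linarith)]
    nlinarith
  rw [← exp_log (by positivity : (0 : ℝ) < (1 + c) ^ m), log_pow, mul_div_assoc]
  exact exp_le_exp.2 (mul_le_mul_of_nonneg_left hlog m.cast_nonneg)

lemma exp_le_one_add_pow_floor {eps1 L : ℝ} (heps1 : 0 < eps1) (heps1' : eps1 < 1) (hL : 1 ≤ L) :
    exp L ≤ (1 + 3 * eps1 / (4 * L ^ 2)) ^ ⌊40 / eps1 * L ^ 3⌋₊ := by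
  set c := 3 * eps1 / (4 * L ^ 2)
  have hc0 : 0 ≤ c := by positivity
  have hc1 : c ≤ 1 := by rw [div_le_one (by positivity)]; nlinarith
  have hRc : 40 / eps1 * L ^ 3 * c = 30 * L := by simp only [c]; field_simp; ring
  refine le_trans (exp_le_exp.2 ?_) (exp_mul_half_le_one_add_pow hc0 (by linarith) _)
  nlinarith [mul_le_mul_of_nonneg_right (Nat.sub_one_lt_floor (40 / eps1 * L ^ 3)).le hc0]

lemma lt_of_one_add_mul_le_succ {b : ℕ → ℝ} {a c N : ℝ} (hb : Monotone b) (hc : 0 ≤ c)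
    (h0 : a ≤ b 0) (hstep : ∀ j, b j ≤ N → (1 + c) * b j ≤ b (j + 1)) {m : ℕ}
    (hm : N < a * (1 + c) ^ m) : N < b m := by
  have key : ∀ j, N < b j ∨ a * (1 + c) ^ j ≤ b j := by
    intro j
    induction j with
    | zero => simpa using Or.inr h0
    | succ j ih =>
      by_cases hj : b j ≤ N
      · refine Or.inr ?_
        calc a * (1 + c) ^ (j + 1) = (1 + c) * (a * (1 + c) ^ j) := by ring
          _ ≤ (1 + c) * b j := by
            gcongr
            exact ih.resolve_left hj.not_gt
          _ ≤ b (j + 1) := hstep j hj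
      · exact Or.inl ((not_le.1 hj).trans_le (hb j.le_succ))
  exact (key m).elim id hm.trans_le

section epsFun

variable {eps1 k : ℝ}

lemma epsFun_nonneg (heps1 : 0 ≤ eps1) (x : ℝ) : 0 ≤ epsFun eps1 k x := by
  unfold epsFun; split <;> positivity

lemma epsFun_of_le {x : ℝ} (hx : k / 5 ≤ x) : epsFun eps1 k x = eps1 / log (15 * x / k) ^ 2 :=
  if_neg hx.not_gt

lemma antitoneOn_epsFun (heps1 : 0 ≤ eps1) (hk : 0 < k) :
    AntitoneOn (epsFun eps1 k) (Set.Ici (k / 5)) := by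
  intro x hx y hy hxy
  have hx3 : 3 ≤ 15 * x / k := by rw [le_div_iff₀ hk]; linarith [Set.mem_Ici.1 hx]
  have hlog : 0 < log (15 * x / k) := log_pos (by linarith)
  rw [epsFun_of_le hx, epsFun_of_le hy]
  gcongr

lemma monotoneOn_epsFun_mul_self (heps1 : 0 ≤ eps1) (hk : 0 < k) :
    MonotoneOn (fun x => epsFun eps1 k x * x) (Set.Ici (k / 2)) := by
  have hrescale : ∀ x ∈ Set.Ici (k / 2),
      epsFun eps1 k x * x = eps1 * k / 15 * ((15 * x / k) / log (15 * x / k) ^ 2) := by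
    intro x hx
    rw [epsFun_of_le (by linarith [Set.mem_Ici.1 hx])]
    field_simp
  have hexp : ∀ x ∈ Set.Ici (k / 2), 15 * x / k ∈ Set.Ici (exp 2) := by
    intro x hx
    rw [Set.mem_Ici, le_div_iff₀ hk]
    linarith [Set.mem_Ici.1 hx, mul_lt_mul_of_pos_right exp_two_lt_fifteen_halves hk]
  intro x hx y hy hxy
  simp only [hrescale x hx, hrescale y hy]
  exact mul_le_mul_of_nonneg_left
    (monotoneOn_div_log_sq (hexp x hx) (hexp y hy) (by gcongr)) (by positivity)

end epsFun

section ballAvoid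

variable {V : Type*} {G : SimpleGraph V} {W C : Set V}

lemma ballAvoid_mono {r r' : ℝ} (h : r ≤ r') : ballAvoid G W C r ⊆ ballAvoid G W C r' :=
  fun _ ⟨c, hc, p, hl, hs⟩ => ⟨c, hc, p, hl.trans h, hs⟩

lemma subset_ballAvoid (hCW : C ∩ W = ∅) {r : ℝ} (hr : 0 ≤ r) : C ⊆ ballAvoid G W C r := by
  intro x hx
  refine ⟨x, hx, .nil, by simpa using hr, ?_⟩
  simp only [SimpleGraph.Walk.support_nil, List.mem_singleton, forall_eq]
  exact fun hxW => (Set.eq_empty_iff_forall_notMem.1 hCW) x ⟨hx, hxW⟩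

lemma union_extNbr_diff_subset_ballAvoid (r : ℝ) :
    ballAvoid G W C r ∪ (extNbr G (ballAvoid G W C r) \ W) ⊆ ballAvoid G W C (r + 1) := by
  rintro v (hv | ⟨⟨-, u, ⟨c, hc, p, hpl, hps⟩, huv⟩, hvW⟩)
  · exact ballAvoid_mono (by linarith) hv
  · refine ⟨c, hc, p.concat huv, by push_cast [p.length_concat]; linarith, fun x hx => ?_⟩
    rw [p.support_concat, List.mem_append, List.mem_singleton] at hx
    rcases hx with hx | rfl
    · exact hps x hx
    · exact hvW

lemma ncard_ballAvoid_add_ncard_extNbr_le [Finite V] (r : ℝ) :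
    (ballAvoid G W C r).ncard + (extNbr G (ballAvoid G W C r)).ncard ≤
      (ballAvoid G W C (r + 1)).ncard + W.ncard := by
  set X := ballAvoid G W C r
  have hdisj : Disjoint X (extNbr G X \ W) :=
    Set.disjoint_left.2 fun _ hv hN => hN.1.1 hv
  have hunion :=
    Set.ncard_le_ncard (union_extNbr_diff_subset_ballAvoid (G := G) (W := W) (C := C) r)
  rw [Set.ncard_union_eq hdisj] at hunion
  linarith [Set.ncard_le_ncard_sdiff_add_ncard (extNbr G X) W]

end ballAvoid

lemma avgDeg_nonneg {V : Type*} (G : SimpleGraph V) : 0 ≤ avgDeg G :=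
  div_nonneg (finsum_nonneg fun _ => Nat.cast_nonneg _) (Nat.cast_nonneg _)

namespace IsExpander

variable {V : Type*} {G : SimpleGraph V} {eps1 k : ℝ}

lemma epsFun_mul_le_ncard_extNbr (hG : IsExpander G eps1 k) (heps1 : 0 ≤ eps1) {X : Set V}
    (hX : k / 2 ≤ X.ncard) (hX' : (X.ncard : ℝ) ≤ Nat.card V / 2) :
    epsFun eps1 k X.ncard * X.ncard ≤ (extNbr G X).ncard := by
  have h := hG X hX hX' ⊥ bot_le (by
    rw [SimpleGraph.edgeSet_bot, Set.ncard_empty, Nat.cast_zero]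
    exact mul_nonneg (mul_nonneg (avgDeg_nonneg G) (epsFun_nonneg heps1 _)) X.ncard.cast_nonneg)
  rwa [sdiff_bot] at h

lemma one_add_mul_ncard_ballAvoid_le [Finite V] (hG : IsExpander G eps1 k) (heps1 : 0 ≤ eps1)
    (hk : 0 < k) {W C : Set V} (hCW : C ∩ W = ∅) (hC : k / 2 ≤ C.ncard)
    (hW : (W.ncard : ℝ) ≤ epsFun eps1 k C.ncard * C.ncard / 4) {r : ℝ} (hr : 0 ≤ r)
    (hX : ((ballAvoid G W C r).ncard : ℝ) ≤ Nat.card V / 2) :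
    (1 + 3 / 4 * epsFun eps1 k (Nat.card V)) * (ballAvoid G W C r).ncard ≤
      (ballAvoid G W C (r + 1)).ncard := by
  set X := ballAvoid G W C r
  have hCX : (C.ncard : ℝ) ≤ X.ncard := by
    exact_mod_cast Set.ncard_le_ncard (subset_ballAvoid hCW hr)
  have hXV : (X.ncard : ℝ) ≤ Nat.card V := by exact_mod_cast Set.ncard_le_card X
  have hεX : epsFun eps1 k (Nat.card V) ≤ epsFun eps1 k X.ncard :=
    antitoneOn_epsFun heps1 hk (Set.mem_Ici.2 (by linarith)) (Set.mem_Ici.2 (by linarith)) hXV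
  have hWX : (W.ncard : ℝ) ≤ epsFun eps1 k X.ncard * X.ncard / 4 := by
    linarith [monotoneOn_epsFun_mul_self heps1 hk (Set.mem_Ici.2 hC)
      (Set.mem_Ici.2 (hC.trans hCX)) hCX]
  have hexpand := hG.epsFun_mul_le_ncard_extNbr heps1 (hC.trans hCX) hX
  have hcount :
      (X.ncard : ℝ) + (extNbr G X).ncard ≤ (ballAvoid G W C (r + 1)).ncard + W.ncard := by
    exact_mod_cast ncard_ballAvoid_add_ncard_extNbr_le r
  nlinarith [mul_le_mul_of_nonneg_right hεX X.ncard.cast_nonneg]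

lemma half_card_lt_ncard_ballAvoid [Finite V] (hG : IsExpander G eps1 k) (heps1 : 0 ≤ eps1)
    (hk : 0 < k) {W C : Set V} (hCW : C ∩ W = ∅) (hC : k / 2 ≤ C.ncard)
    (hW : (W.ncard : ℝ) ≤ epsFun eps1 k C.ncard * C.ncard / 4) {m : ℕ}
    (hm : (Nat.card V : ℝ) / 2 < k / 2 * (1 + 3 / 4 * epsFun eps1 k (Nat.card V)) ^ m) :
    (Nat.card V : ℝ) / 2 < (ballAvoid G W C m).ncard := by
  have hmono : Monotone fun j : ℕ => ((ballAvoid G W C j).ncard : ℝ) :=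
    monotone_nat_of_le_succ fun j => by
      exact_mod_cast Set.ncard_le_ncard (ballAvoid_mono (by push_cast; linarith))
  have h0 : k / 2 ≤ (ballAvoid G W C (0 : ℕ)).ncard :=
    hC.trans (by exact_mod_cast Set.ncard_le_ncard (subset_ballAvoid hCW le_rfl))
  refine lt_of_one_add_mul_le_succ hmono (mul_nonneg (by norm_num) (epsFun_nonneg heps1 _)) h0
    (fun j hj => ?_) hm
  simpa only [Nat.cast_succ] using
    hG.one_add_mul_ncard_ballAvoid_le heps1 hk hCW hC hW j.cast_nonneg hj

end IsExpander

theorem statement_5 (eps1 eps2 : Real)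
    (heps1 : 0 < eps1) (heps1' : eps1 < 1) (heps2 : 0 < eps2) (heps2' : eps2 < 1) :
    ∃ d₀ : Real, ∀ (V : Type) [Fintype V] (G : SimpleGraph V) (n : Nat) (d : Real),
      Nat.card V = n → d₀ ≤ d → d ≤ (n : Real) →
      IsExpander G eps1 (eps2 * d) → minDegGe G (d - 1) →
      ∀ W C : Set V, C ∩ W = ∅ →
        eps2 * d / 2 ≤ (C.ncard : Real) →
        (W.ncard : Real) ≤ epsFun eps1 (eps2 * d) (C.ncard) * (C.ncard : Real) / 4 →
        (n : Real) / 2 <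
          ((ballAvoid G W C ((40 / eps1) * (Real.log (15 * n / (eps2 * d))) ^ 3)).ncard : Real) := by
  refine ⟨1, fun V _ G n d hn hd hdn hG _ W C hCW hC hW => ?_⟩
  set k := eps2 * d
  set L := log (15 * n / k)
  have hk : 0 < k := mul_pos heps2 (by linarith)
  have hkn : k ≤ n := by nlinarith
  have h15 : 15 ≤ 15 * n / k := by rw [le_div_iff₀ hk]; linarith
  have hexpL : exp L = 15 * n / k := exp_log (by linarith)
  have hL : 1 ≤ L := by rw [le_log_iff_exp_le (by linarith)]; linarith [exp_one_lt_d9]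
  have hc : 3 / 4 * epsFun eps1 k n = 3 * eps1 / (4 * L ^ 2) := by
    rw [epsFun_of_le (by linarith)]; ring
  have hgrowth : (n : ℝ) / 2 < k / 2 * (1 + 3 / 4 * epsFun eps1 k n) ^ ⌊40 / eps1 * L ^ 3⌋₊ := by
    have := exp_le_one_add_pow_floor heps1 heps1' hL
    rw [hexpL, ← hc, div_le_iff₀ hk] at this
    nlinarith
  rw [← hn] at hgrowth ⊢
  exact (hG.half_card_lt_ncard_ballAvoid heps1.le hk hCW hC hW hgrowth).trans_le <| by
    exact_mod_cast Set.ncard_le_ncard (ballAvoid_mono (Nat.floor_le (by positivity)))
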